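/- Let m, m̃ be monomials in the n-mode Weyl algebra with multi-degrees (α, β) and (α̃, α̃), respectively (the second monomial has equal creation and annihilation multi-degrees). Then [m, m̃] = 0 if and only if for every index j with α̃ⱼ ≠ 0 one has αⱼ = βⱼ. -/

import Mathlib

open scoped BigOperators

namespace WeylPaper

/-- Defining relations of the `n`-th Weyl algebra: generators `Sum.inl k` are the
annihilation operators `aₖ`, generators `Sum.inr k` are the creation operators `aₖ†`,
with `[aᵢ, aⱼ†] = δᵢⱼ` and all other commutators of generators vanishing. -/
inductive WeylRel (n : ℕ) :
    FreeAlgebra ℂ (Fin n ⊕ Fin n) → FreeAlgebra ℂ (Fin n ⊕ Fin n) → Prop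
  | ann_cre (i j : Fin n) :
      WeylRel n (FreeAlgebra.ι ℂ (Sum.inl i) * FreeAlgebra.ι ℂ (Sum.inr j))
        (FreeAlgebra.ι ℂ (Sum.inr j) * FreeAlgebra.ι ℂ (Sum.inl i) +
          if i = j then 1 else 0)
  | ann_ann (i j : Fin n) :
      WeylRel n (FreeAlgebra.ι ℂ (Sum.inl i) * FreeAlgebra.ι ℂ (Sum.inl j))
        (FreeAlgebra.ι ℂ (Sum.inl j) * FreeAlgebra.ι ℂ (Sum.inl i))
  | cre_cre (i j : Fin n) :
      WeylRel n (FreeAlgebra.ι ℂ (Sum.inr i) * FreeAlgebra.ι ℂ (Sum.inr j))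
        (FreeAlgebra.ι ℂ (Sum.inr j) * FreeAlgebra.ι ℂ (Sum.inr i))

/-- The `n`-th Weyl algebra `Aₙ`. -/
abbrev Weyl (n : ℕ) := RingQuot (WeylRel n)

/-- The annihilation operator `aₖ`. -/
noncomputable def ann {n : ℕ} (k : Fin n) : Weyl n :=
  RingQuot.mkAlgHom ℂ (WeylRel n) (FreeAlgebra.ι ℂ (Sum.inl k))

/-- The creation operator `aₖ†`. -/
noncomputable def cre {n : ℕ} (k : Fin n) : Weyl n :=
  RingQuot.mkAlgHom ℂ (WeylRel n) (FreeAlgebra.ι ℂ (Sum.inr k))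

/-- The commutator `[x, y] = xy - yx`. -/
def comm {n : ℕ} (x y : Weyl n) : Weyl n := x * y - y * x

/-- The normal-ordered monomial `a^{(α,β)} = ∏ⱼ (aⱼ†)^{αⱼ} · ∏ⱼ aⱼ^{βⱼ}`. -/
noncomputable def nom {n : ℕ} (α β : Fin n → ℕ) : Weyl n :=
  ((List.finRange n).map fun j => cre j ^ α j).prod *
  ((List.finRange n).map fun j => ann j ^ β j).prod

/-- `degLe x d` : `x` admits an expansion into normal-ordered monomials of degree
`|γ| = |α| + |β| ≤ d` (this is "deg(x) ≤ d"; it holds for `x = 0` and every `d`,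
matching `deg 0 = -∞`). -/
def degLe {n : ℕ} (x : Weyl n) (d : ℤ) : Prop :=
  ∃ c : ((Fin n → ℕ) × (Fin n → ℕ)) →₀ ℂ,
    x = c.sum (fun γ z => z • nom γ.1 γ.2) ∧
    ∀ γ ∈ c.support, ((∑ j, γ.1 j : ℕ) : ℤ) + ((∑ j, γ.2 j : ℕ) : ℤ) ≤ d

/-- `hasDeg x d` : `x` has degree exactly `d`. -/
def hasDeg {n : ℕ} (x : Weyl n) (d : ℤ) : Prop := degLe x d ∧ ¬ degLe x (d - 1)

/-- The generator corresponding to a letter. -/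
noncomputable def gen {n : ℕ} : (Fin n ⊕ Fin n) → Weyl n := Sum.elim ann cre

/-- The monomial (word in the generators `aₖ`, `aₖ†`) given by a list of letters. -/
noncomputable def word {n : ℕ} (w : List (Fin n ⊕ Fin n)) : Weyl n := (w.map gen).prod

/-- `α` : number of occurrences of `aⱼ†` in the word `w`. -/
def mdegC {n : ℕ} (w : List (Fin n ⊕ Fin n)) (j : Fin n) : ℕ := w.count (Sum.inr j)

/-- `β` : number of occurrences of `aⱼ` in the word `w`. -/
def mdegA {n : ℕ} (w : List (Fin n ⊕ Fin n)) (j : Fin n) : ℕ := w.count (Sum.inl j)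

/-- The basis element `g₊^{(α,β)} = i (a^{(β,α)} + a^{(α,β)})`. -/
noncomputable def gplus {n : ℕ} (α β : Fin n → ℕ) : Weyl n :=
  Complex.I • (nom β α + nom α β)

/-- The basis element `g₋^{(α,β)} = a^{(β,α)} - a^{(α,β)}`. -/
noncomputable def gminus {n : ℕ} (α β : Fin n → ℕ) : Weyl n :=
  nom β α - nom α β

/-- Type synonym for the opposite algebra, with ℂ acting through conjugation;
used to construct the adjoint `(·)†`. -/
def Conj (n : ℕ) : Type := (Weyl n)ᵐᵒᵖ

instance (n : ℕ) : Ring (Conj n) := inferInstanceAs (Ring (Weyl n)ᵐᵒᵖ)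

noncomputable instance (n : ℕ) : Algebra ℂ (Conj n) :=
  RingHom.toAlgebra' ((algebraMap ℂ (Weyl n)ᵐᵒᵖ).comp (starRingEnd ℂ))
    (fun c x =>
      Algebra.commutes (A := (Weyl n)ᵐᵒᵖ) (starRingEnd ℂ c) (show (Weyl n)ᵐᵒᵖ from x))

noncomputable def daggerAux (n : ℕ) : FreeAlgebra ℂ (Fin n ⊕ Fin n) →ₐ[ℂ] Conj n :=
  FreeAlgebra.lift ℂ fun s =>
    (MulOpposite.op (Sum.elim (fun k => cre k) (fun k => ann k) s : Weyl n) : Conj n)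

noncomputable def daggerHom (n : ℕ) : Weyl n →+* Conj n :=
  RingQuot.lift ⟨(daggerAux n).toRingHom, by
    have key : ∀ (x y : FreeAlgebra ℂ (Fin n ⊕ Fin n)), WeylRel n x y →
        RingQuot.mkAlgHom ℂ (WeylRel n) x = RingQuot.mkAlgHom ℂ (WeylRel n) y :=
      fun x y h => RingQuot.mkAlgHom_rel ℂ h
    intro x y h
    induction h with
    | ann_cre i j =>
        show (daggerAux n) _ = (daggerAux n) _
        by_cases hij : i = j
        · subst hij
          have hcomm : (ann i : Weyl n) * cre i = cre i * ann i + 1 := by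
            have hrel := key _ _ (WeylRel.ann_cre i i)
            rw [if_pos rfl] at hrel
            simpa [ann, cre] using hrel
          simp only [eq_self_iff_true, if_true, ite_true, map_mul, map_add, map_one, daggerAux,
            FreeAlgebra.lift_ι_apply, Sum.elim_inl, Sum.elim_inr]
          erw [FreeAlgebra.lift_ι_apply, FreeAlgebra.lift_ι_apply]
          calc (MulOpposite.op (cre i) : Conj n) * MulOpposite.op (ann i)
              = MulOpposite.op ((ann i : Weyl n) * cre i) := rfl
            _ = MulOpposite.op ((cre i : Weyl n) * ann i + 1) := by rw [hcomm]
            _ = MulOpposite.op (ann i) * MulOpposite.op (cre i) + 1 := rfl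
        · have hcomm : (ann j : Weyl n) * cre i = cre i * ann j := by
            have hrel := key _ _ (WeylRel.ann_cre j i)
            rw [if_neg (fun h => hij h.symm)] at hrel
            simpa [ann, cre] using hrel
          simp only [if_neg hij, map_mul, map_add, map_zero, add_zero, daggerAux,
            FreeAlgebra.lift_ι_apply, Sum.elim_inl, Sum.elim_inr]
          erw [FreeAlgebra.lift_ι_apply, FreeAlgebra.lift_ι_apply]
          calc (MulOpposite.op (cre i) : Conj n) * MulOpposite.op (ann j)
              = MulOpposite.op ((ann j : Weyl n) * cre i) := rfl
            _ = MulOpposite.op ((cre i : Weyl n) * ann j) := by rw [hcomm]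
            _ = MulOpposite.op (ann j) * MulOpposite.op (cre i) := rfl
    | ann_ann i j =>
        show (daggerAux n) _ = (daggerAux n) _
        have hcomm : (cre j : Weyl n) * cre i = cre i * cre j := by
          simpa [cre] using key _ _ (WeylRel.cre_cre j i)
        simp only [map_mul, daggerAux, FreeAlgebra.lift_ι_apply, Sum.elim_inl]
        erw [FreeAlgebra.lift_ι_apply, FreeAlgebra.lift_ι_apply]
        calc (MulOpposite.op (cre i) : Conj n) * MulOpposite.op (cre j)
            = MulOpposite.op ((cre j : Weyl n) * cre i) := rfl
          _ = MulOpposite.op ((cre i : Weyl n) * cre j) := by rw [hcomm]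
          _ = MulOpposite.op (cre j) * MulOpposite.op (cre i) := rfl
    | cre_cre i j =>
        show (daggerAux n) _ = (daggerAux n) _
        have hcomm : (ann j : Weyl n) * ann i = ann i * ann j := by
          simpa [ann] using key _ _ (WeylRel.ann_ann j i)
        simp only [map_mul, daggerAux, FreeAlgebra.lift_ι_apply, Sum.elim_inr]
        erw [FreeAlgebra.lift_ι_apply, FreeAlgebra.lift_ι_apply]
        calc (MulOpposite.op (ann i) : Conj n) * MulOpposite.op (ann j)
            = MulOpposite.op ((ann j : Weyl n) * ann i) := rfl
          _ = MulOpposite.op ((ann i : Weyl n) * ann j) := by rw [hcomm]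
          _ = MulOpposite.op (ann j) * MulOpposite.op (ann i) := rfl⟩

/-- The adjoint `(·)†` : the ℂ-antilinear anti-automorphism of the Weyl algebra
determined by `(aⱼ)† = aⱼ†` and `(aⱼ†)† = aⱼ`. -/
noncomputable def dagger {n : ℕ} (x : Weyl n) : Weyl n :=
  MulOpposite.unop (show (Weyl n)ᵐᵒᵖ from daggerHom n x)


section Basic
variable {n : ℕ}

lemma ann_cre_same (j : Fin n) : ann j * cre j = cre j * ann j + 1 := by
  have h := RingQuot.mkAlgHom_rel ℂ (WeylRel.ann_cre (n := n) j j)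
  rw [if_pos rfl] at h
  simpa [ann, cre] using h

lemma ann_cre_comm (i j : Fin n) (hij : i ≠ j) : ann i * cre j = cre j * ann i := by
  have h := RingQuot.mkAlgHom_rel ℂ (WeylRel.ann_cre (n := n) i j)
  rw [if_neg hij] at h
  simpa [ann, cre] using h

lemma ann_ann_comm (i j : Fin n) : ann i * ann j = ann j * ann i := by
  simpa [ann] using RingQuot.mkAlgHom_rel ℂ (WeylRel.ann_ann (n := n) i j)

lemma cre_cre_comm (i j : Fin n) : cre i * cre j = cre j * cre i := by
  simpa [cre] using RingQuot.mkAlgHom_rel ℂ (WeylRel.cre_cre (n := n) i j)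

/-- The mode of a letter. -/
def modeOf : Fin n ⊕ Fin n → Fin n := Sum.elim id id

lemma gen_comm {s t : Fin n ⊕ Fin n} (h : modeOf s ≠ modeOf t) :
    Commute (gen s) (gen t) := by
  cases s with
  | inl i => cases t with
    | inl j => exact ann_ann_comm i j
    | inr j => exact ann_cre_comm i j (by simpa [modeOf] using h)
  | inr i => cases t with
    | inl j => exact (ann_cre_comm j i (by simpa [modeOf] using (Ne.symm h))).symm
    | inr j => exact cre_cre_comm i j

end Basic

section Rep
variable {n : ℕ}

/-- unit vector -/
def eZ (j : Fin n) : Fin n → ℤ := fun i => if i = j then 1 else 0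

abbrev V (n : ℕ) := (Fin n → ℤ) →₀ ℂ

noncomputable def opGen : Fin n ⊕ Fin n → Module.End ℂ (V n)
  | Sum.inl j => Finsupp.lsum ℂ fun γ => ((γ j : ℂ)) • Finsupp.lsingle (fun i => γ i - eZ j i)
  | Sum.inr j => Finsupp.lsum ℂ fun γ => Finsupp.lsingle (fun i => γ i + eZ j i)

lemma opGen_inl (j : Fin n) (γ : Fin n → ℤ) (c : ℂ) :
    opGen (Sum.inl j) (Finsupp.single γ c) =
      ((γ j : ℂ)) • Finsupp.single (fun i => γ i - eZ j i) c := by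
  simp [opGen, Finsupp.lsum_single]

lemma opGen_inr (j : Fin n) (γ : Fin n → ℤ) (c : ℂ) :
    opGen (Sum.inr j) (Finsupp.single γ c) =
      Finsupp.single (fun i => γ i + eZ j i) c := by
  simp [opGen, Finsupp.lsum_single]

noncomputable def rep (n : ℕ) : Weyl n →ₐ[ℂ] Module.End ℂ (V n) :=
  RingQuot.liftAlgHom ℂ ⟨FreeAlgebra.lift ℂ opGen, by
    intro x y h
    induction h with
    | ann_cre i j =>
        by_cases hij : i = j
        · subst hij
          rw [if_pos rfl]
          simp only [map_mul, map_add, map_one, FreeAlgebra.lift_ι_apply]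
          refine Finsupp.lhom_ext fun γ c => ?_
          simp only [Module.End.mul_apply, LinearMap.add_apply, Module.End.one_apply,
            opGen_inl, opGen_inr, map_smul]
          have h1 : (fun k => γ k + eZ i k - eZ i k) = γ := by funext k; ring
          have h2 : (fun k => γ k - eZ i k + eZ i k) = γ := by funext k; ring
          rw [h1, h2]
          have h3 : ((γ i + eZ i i : ℤ) : ℂ) = (γ i : ℂ) + 1 := by
            simp [eZ]
          rw [h3, add_smul, one_smul]
        · rw [if_neg hij]
          simp only [map_mul, map_add, map_zero, add_zero, FreeAlgebra.lift_ι_apply]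
          refine Finsupp.lhom_ext fun γ c => ?_
          simp only [Module.End.mul_apply, opGen_inl, opGen_inr, map_smul]
          have h1 : (fun k => γ k + eZ j k - eZ i k) = fun k => γ k - eZ i k + eZ j k := by
            funext k; ring
          have h2 : ((γ i + eZ j i : ℤ) : ℂ) = (γ i : ℂ) := by
            simp [eZ, hij]
          rw [h1, h2]
    | ann_ann i j =>
        simp only [map_mul, FreeAlgebra.lift_ι_apply]
        refine Finsupp.lhom_ext fun γ c => ?_
        simp only [Module.End.mul_apply, opGen_inl, map_smul]
        have h1 : (fun k => γ k - eZ j k - eZ i k) = fun k => γ k - eZ i k - eZ j k := by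
          funext k; ring
        rw [h1, smul_smul, smul_smul]
        congr 1
        by_cases hij : i = j
        · subst hij; push_cast; ring
        · have he1 : (eZ j i : ℤ) = 0 := by simp [eZ, hij]
          have he2 : (eZ i j : ℤ) = 0 := by simp [eZ]; exact fun h => hij h.symm
          rw [he1, he2]
          push_cast
          ring
    | cre_cre i j =>
        simp only [map_mul, FreeAlgebra.lift_ι_apply]
        refine Finsupp.lhom_ext fun γ c => ?_
        simp only [Module.End.mul_apply, opGen_inr]
        have h1 : (fun k => γ k + eZ j k + eZ i k) = fun k => γ k + eZ i k + eZ j k := by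
          funext k; ring
        rw [h1]⟩


instance sumBEqLawful {n : ℕ} : LawfulBEq (Fin n ⊕ Fin n) where
  eq_of_beq {a b} h := by
    cases a with
    | inl i => cases b with
      | inl j => have h' : (i == j) = true := h; rw [eq_of_beq h']
      | inr j => exact absurd h (by intro hh; exact Bool.noConfusion hh)
    | inr i => cases b with
      | inl j => exact absurd h (by intro hh; exact Bool.noConfusion hh)
      | inr j => have h' : (i == j) = true := h; rw [eq_of_beq h']
  rfl {a} := by
    cases a with
    | inl i => have : ((Sum.inl i : Fin n ⊕ Fin n) == Sum.inl i) = (i == i) := rfl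
               rw [this]; exact ReflBEq.rfl
    | inr i => have : ((Sum.inr i : Fin n ⊕ Fin n) == Sum.inr i) = (i == i) := rfl
               rw [this]; exact ReflBEq.rfl

/-- signed multidegree -/
def dZ (u : List (Fin n ⊕ Fin n)) : Fin n → ℤ := fun j => (mdegC u j : ℤ) - mdegA u j

/-- the eigen-coefficient of the action of a word on the basis vector `δ_γ` -/
def coefZ : List (Fin n ⊕ Fin n) → (Fin n → ℤ) → ℤ
  | [], _ => 1
  | (Sum.inl j) :: u, γ => (γ j + dZ u j) * coefZ u γ
  | (Sum.inr j) :: u, γ => coefZ u γ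

lemma dZ_nil : dZ ([] : List (Fin n ⊕ Fin n)) = fun _ => 0 := by
  funext j; simp [dZ, mdegC, mdegA]

lemma dZ_cons_inl (j : Fin n) (u : List (Fin n ⊕ Fin n)) :
    dZ (Sum.inl j :: u) = fun i => dZ u i - eZ j i := by
  funext i
  by_cases h : i = j
  · subst h
    simp [dZ, mdegC, mdegA, eZ, List.count_cons, beq_iff_eq]
    ring
  · have h' : ¬ j = i := fun hh => h hh.symm
    simp [dZ, mdegC, mdegA, eZ, List.count_cons, beq_iff_eq, h, h']

lemma dZ_cons_inr (j : Fin n) (u : List (Fin n ⊕ Fin n)) :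
    dZ (Sum.inr j :: u) = fun i => dZ u i + eZ j i := by
  funext i
  by_cases h : i = j
  · subst h
    simp [dZ, mdegC, mdegA, eZ, List.count_cons, beq_iff_eq]
    ring
  · have h' : ¬ j = i := fun hh => h hh.symm
    simp [dZ, mdegC, mdegA, eZ, List.count_cons, beq_iff_eq, h, h']

lemma word_nil : word ([] : List (Fin n ⊕ Fin n)) = 1 := by simp [word]

lemma word_cons (s : Fin n ⊕ Fin n) (u : List (Fin n ⊕ Fin n)) :
    word (s :: u) = gen s * word u := by simp [word]

lemma rep_gen (s : Fin n ⊕ Fin n) : rep n (gen s) = opGen s := by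
  cases s with
  | inl j =>
      show rep n (ann j) = _
      rw [ann, rep, RingQuot.liftAlgHom_mkAlgHom_apply]
      simp [FreeAlgebra.lift_ι_apply]
  | inr j =>
      show rep n (cre j) = _
      rw [cre, rep, RingQuot.liftAlgHom_mkAlgHom_apply]
      simp [FreeAlgebra.lift_ι_apply]

lemma rep_word (u : List (Fin n ⊕ Fin n)) (γ : Fin n → ℤ) :
    rep n (word u) (Finsupp.single γ 1) =
      (coefZ u γ : ℂ) • Finsupp.single (fun i => γ i + dZ u i) 1 := by
  induction u with
  | nil =>
      rw [word_nil, map_one, dZ_nil]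
      simp [coefZ]
  | cons s u ih =>
      rw [word_cons, map_mul, Module.End.mul_apply, ih, map_smul, rep_gen]
      cases s with
      | inl j =>
          rw [opGen_inl, dZ_cons_inl]
          rw [smul_smul, coefZ]
          congr 1
          · push_cast; ring
          · congr 1; funext i; ring
      | inr j =>
          rw [opGen_inr, dZ_cons_inr]
          congr 2
          funext i; ring

lemma coefZ_identity (w wt : List (Fin n ⊕ Fin n))
    (ht : ∀ j : Fin n, mdegC wt j = mdegA wt j)
    (hc : comm (word w) (word wt) = 0) (γ : Fin n → ℤ) :
    coefZ w γ * (coefZ wt γ - coefZ wt (fun i => γ i + dZ w i)) = 0 := by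
  have hdt : ∀ i, dZ wt i = 0 := by intro i; simp [dZ, ht i]
  have hmul : word w * word wt = word wt * word w := sub_eq_zero.mp hc
  have e1 : rep n (word wt) (rep n (word w) (Finsupp.single γ 1)) =
      (coefZ w γ * coefZ wt (fun i => γ i + dZ w i) : ℂ) •
        Finsupp.single (fun i => γ i + dZ w i) 1 := by
    rw [rep_word w γ, map_smul, rep_word wt, smul_smul]
    have hidx : (fun i => γ i + dZ w i + dZ wt i) = fun i => γ i + dZ w i := by
      funext i; rw [hdt i]; ring
    rw [hidx]
  have e2 : rep n (word w) (rep n (word wt) (Finsupp.single γ 1)) =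
      (coefZ wt γ * coefZ w γ : ℂ) • Finsupp.single (fun i => γ i + dZ w i) 1 := by
    have hγ : (fun i => γ i + dZ wt i) = γ := by funext i; rw [hdt i]; ring
    rw [rep_word wt γ, hγ, map_smul, rep_word w, smul_smul]
  have happ := congrArg (fun x => rep n x (Finsupp.single γ 1)) hmul
  simp only [map_mul, Module.End.mul_apply] at happ
  rw [e1, e2] at happ
  have hco := congrArg (fun f : V n => f (fun i => γ i + dZ w i)) happ
  simp only [Finsupp.smul_apply, Finsupp.single_eq_same, smul_eq_mul, mul_one] at hco
  have hz : (coefZ wt γ * coefZ w γ : ℤ) =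
      coefZ w γ * coefZ wt (fun i => γ i + dZ w i) := by exact_mod_cast hco
  nlinarith [hz]

lemma mdegC_le_length (u : List (Fin n ⊕ Fin n)) (j : Fin n) : mdegC u j ≤ u.length :=
  List.count_le_length

lemma mdegA_le_length (u : List (Fin n ⊕ Fin n)) (j : Fin n) : mdegA u j ≤ u.length :=
  List.count_le_length

lemma abs_dZ_le (u : List (Fin n ⊕ Fin n)) (j : Fin n) : |dZ u j| ≤ (u.length : ℤ) := by
  have h1 := mdegC_le_length u j
  have h2 := mdegA_le_length u j
  rw [dZ, abs_le]
  constructor <;> [skip; skip] <;> push_cast <;> omega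

lemma one_le_abs_coefZ (u : List (Fin n ⊕ Fin n)) (γ : Fin n → ℤ)
    (h : ∀ j, (u.length : ℤ) + 1 ≤ |γ j|) : 1 ≤ |coefZ u γ| := by
  induction u with
  | nil => simp [coefZ]
  | cons s u ih =>
      have h' : ∀ j, (u.length : ℤ) + 1 ≤ |γ j| := by
        intro j
        have := h j
        simp only [List.length_cons] at this
        push_cast at this ⊢
        omega
      cases s with
      | inl j =>
          rw [coefZ, abs_mul]
          have hf : 1 ≤ |γ j + dZ u j| := by
            have h1 := abs_dZ_le u j
            have h2 := h j
            simp only [List.length_cons] at h2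
            have : |γ j| - |dZ u j| ≤ |γ j + dZ u j| := by
              have := abs_sub_abs_le_abs_sub (γ j) (-dZ u j)
              simpa [sub_neg_eq_add, abs_neg] using this
            push_cast at h2
            omega
          nlinarith [ih h', hf]
      | inr j => exact ih h'

lemma abs_coefZ_ge (u : List (Fin n ⊕ Fin n)) (γ : Fin n → ℤ) (j₀ : Fin n)
    (h : ∀ j, (u.length : ℤ) + 1 ≤ |γ j|) (hj : 1 ≤ mdegA u j₀) :
    |γ j₀| - u.length ≤ |coefZ u γ| := by
  induction u with
  | nil => simp [mdegA] at hj
  | cons s u ih =>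
      have h' : ∀ j, (u.length : ℤ) + 1 ≤ |γ j| := by
        intro j
        have := h j
        simp only [List.length_cons] at this
        push_cast at this ⊢
        omega
      cases s with
      | inl j =>
          rw [coefZ, abs_mul]
          have hco := one_le_abs_coefZ u γ h'
          by_cases hjj : j = j₀
          · subst hjj
            have hf : |γ j| - u.length ≤ |γ j + dZ u j| := by
              have h1 := abs_dZ_le u j
              have : |γ j| - |dZ u j| ≤ |γ j + dZ u j| := by
                have := abs_sub_abs_le_abs_sub (γ j) (-dZ u j)
                simpa [sub_neg_eq_add, abs_neg] using this
              omega
            have hgoal : |γ j| - ((Sum.inl j :: u : List (Fin n ⊕ Fin n)).length : ℤ)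
                ≤ |γ j + dZ u j| * |coefZ u γ| := by
              have hpos : (0:ℤ) ≤ |γ j| - u.length := by
                have := h' j; have := abs_nonneg (γ j); omega
              have hlen : ((Sum.inl j :: u : List (Fin n ⊕ Fin n)).length : ℤ) = u.length + 1 := by
                simp
              rw [hlen]
              nlinarith
            simpa using hgoal
          · have hj' : 1 ≤ mdegA u j₀ := by
              have : mdegA (Sum.inl j :: u) j₀ = mdegA u j₀ := by
                apply List.count_cons_of_ne
                intro hh
                injection hh with hh'
                exact hjj hh'
              omega
            have hf : 1 ≤ |γ j + dZ u j| := by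
              have h1 := abs_dZ_le u j
              have h2 := h' j
              have : |γ j| - |dZ u j| ≤ |γ j + dZ u j| := by
                have := abs_sub_abs_le_abs_sub (γ j) (-dZ u j)
                simpa [sub_neg_eq_add, abs_neg] using this
              omega
            have hih := ih h' hj'
            have : |γ j₀| - ((Sum.inl j :: u : List (Fin n ⊕ Fin n)).length : ℤ)
                ≤ |γ j₀| - u.length := by simp; omega
            have h0 : (0:ℤ) ≤ |γ j₀| - u.length := by
              have := h' j₀; have := abs_nonneg (γ j₀); omega
            nlinarith
      | inr j =>
          have hj' : 1 ≤ mdegA u j₀ := by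
            have : mdegA (Sum.inr j :: u) j₀ = mdegA u j₀ := by
              apply List.count_cons_of_ne
              simp
            omega
          have hih := ih h' hj'
          rw [coefZ]
          simp only [List.length_cons]
          push_cast
          omega

lemma forward_dir (w wt : List (Fin n ⊕ Fin n))
    (ht : ∀ j : Fin n, mdegC wt j = mdegA wt j)
    (hc : comm (word w) (word wt) = 0) :
    ∀ j : Fin n, mdegC wt j ≠ 0 → mdegC w j = mdegA w j := by
  by_contra hcon
  push_neg at hcon
  obtain ⟨j₀, hwt0, hne⟩ := hcon
  have hA : 1 ≤ mdegA wt j₀ := by rw [← ht j₀]; omega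
  have hδ : dZ w j₀ ≠ 0 := by
    simp only [dZ]
    intro hh
    apply hne
    omega
  set B : ℤ := (w.length : ℤ) + wt.length + 1 with hB
  set γk : ℕ → Fin n → ℤ :=
    fun k j => if 0 ≤ dZ w j then B + k * dZ w j else -B + k * dZ w j with hγk
  have habs : ∀ k j, B ≤ |γk k j| := by
    intro k j
    simp only [hγk]
    by_cases hd : 0 ≤ dZ w j
    · rw [if_pos hd]
      have h1 : (0:ℤ) ≤ (k:ℤ) * dZ w j := by positivity
      have h2 : (0:ℤ) < B := by rw [hB]; positivity
      rw [abs_of_nonneg (by omega)]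
      omega
    · rw [if_neg hd]
      push_neg at hd
      have h1 : (k:ℤ) * dZ w j ≤ 0 := by
        apply mul_nonpos_of_nonneg_of_nonpos
        · positivity
        · omega
      have h2 : (0:ℤ) < B := by rw [hB]; positivity
      rw [abs_of_nonpos (by omega)]
      omega
  have hw1 : ∀ k j, (w.length : ℤ) + 1 ≤ |γk k j| := by
    intro k j
    have := habs k j
    rw [hB] at this
    have : (0:ℤ) ≤ wt.length := by positivity
    omega
  have hwt1 : ∀ k j, (wt.length : ℤ) + 1 ≤ |γk k j| := by
    intro k j
    have := habs k j
    rw [hB] at this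
    have : (0:ℤ) ≤ w.length := by positivity
    omega
  have hstep : ∀ k : ℕ, (fun i => γk k i + dZ w i) = γk (k + 1) := by
    intro k
    funext i
    rw [hγk]
    by_cases hd : 0 ≤ dZ w i
    · simp only [if_pos hd]
      push_cast
      ring
    · simp only [if_neg hd]
      push_cast
      ring
  have hconst : ∀ k : ℕ, coefZ wt (γk k) = coefZ wt (γk 0) := by
    intro k
    induction k with
    | zero => rfl
    | succ k ih =>
        have hid := coefZ_identity w wt ht hc (γk k)
        have hw0 : coefZ w (γk k) ≠ 0 := by
          have := one_le_abs_coefZ w (γk k) (hw1 k)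
          intro hz
          rw [hz] at this
          simp at this
        rw [hstep k] at hid
        rcases mul_eq_zero.mp hid with h | h
        · exact absurd h hw0
        · have : coefZ wt (γk k) = coefZ wt (γk (k + 1)) := by omega
          rw [← this, ih]
  have hgrow : ∀ k : ℕ, (k : ℤ) + 1 ≤ |coefZ wt (γk k)| := by
    intro k
    have h6 : B + k ≤ |γk k j₀| := by
      simp only [hγk]
      by_cases hd : 0 ≤ dZ w j₀
      · simp only [if_pos hd]
        have hd1 : 1 ≤ dZ w j₀ := by omega
        have h1 : (k:ℤ) ≤ (k:ℤ) * dZ w j₀ := by nlinarith [Int.ofNat_nonneg k]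
        have h2 : (0:ℤ) < B := by rw [hB]; positivity
        rw [abs_of_nonneg (by omega)]
        omega
      · simp only [if_neg hd]
        push_neg at hd
        have hd1 : dZ w j₀ ≤ -1 := by omega
        have h1 : (k:ℤ) * dZ w j₀ ≤ -(k:ℤ) := by nlinarith [Int.ofNat_nonneg k]
        have h2 : (0:ℤ) < B := by rw [hB]; positivity
        rw [abs_of_nonpos (by omega)]
        omega
    have h7 := abs_coefZ_ge wt (γk k) j₀ (hwt1 k) hA
    rw [hB] at h6
    have : (0:ℤ) ≤ w.length := by positivity
    omega
  have hfin := hgrow (coefZ wt (γk 0)).natAbs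
  have h8 := hconst (coefZ wt (γk 0)).natAbs
  rw [h8] at hfin
  have h9 : |coefZ wt (γk 0)| = ((coefZ wt (γk 0)).natAbs : ℤ) := Int.abs_eq_natAbs _
  omega


end Rep
section Reverse
variable {n : ℕ}

lemma commute_gen_word {x : Weyl n} (u : List (Fin n ⊕ Fin n))
    (h : ∀ s ∈ u, Commute x (gen s)) : Commute x (word u) := by
  show Commute x ((u.map gen).prod)
  apply Commute.list_prod_right
  intro y hy
  obtain ⟨s, hs, rfl⟩ := List.mem_map.mp hy
  exact h s hs

lemma commute_word_word {u v : List (Fin n ⊕ Fin n)}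
    (h : ∀ s ∈ u, ∀ t ∈ v, Commute (gen s) (gen t)) : Commute (word u) (word v) := by
  show Commute ((u.map gen).prod) (word v)
  apply Commute.list_prod_left
  intro y hy
  obtain ⟨s, hs, rfl⟩ := List.mem_map.mp hy
  exact commute_gen_word v (h s hs)

lemma word_filter_split (p : (Fin n ⊕ Fin n) → Bool) (u : List (Fin n ⊕ Fin n))
    (hp : ∀ s t, p s = true → p t = false → Commute (gen s) (gen t)) :
    word u = word (u.filter p) * word (u.filter fun s => !p s) := by
  induction u with
  | nil => simp [word_nil, List.filter_nil]
  | cons s u ih =>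
      rcases hps : p s with _ | _
      · -- p s = false
        have hcomm : Commute (gen s) (word (u.filter p)) := by
          apply commute_gen_word
          intro t htmem
          have hpt : p t = true := List.of_mem_filter htmem
          exact (hp t s hpt hps).symm
        rw [word_cons, ih]
        rw [List.filter_cons_of_neg (by simp [hps]), List.filter_cons_of_pos (by simp [hps])]
        rw [word_cons, ← mul_assoc, hcomm.eq, mul_assoc]
      · -- p s = true
        rw [word_cons, ih]
        rw [List.filter_cons_of_pos (by simp [hps]), List.filter_cons_of_neg (by simp [hps])]
        rw [word_cons, mul_assoc]

lemma modeOf_mem_cases (s : Fin n ⊕ Fin n) (j : Fin n) (h : modeOf s = j) :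
    s = Sum.inl j ∨ s = Sum.inr j := by
  cases s with
  | inl i => left; simp [modeOf] at h; rw [h]
  | inr i => right; simp [modeOf] at h; rw [h]

lemma word_mode_factor (ms : List (Fin n)) (hnd : ms.Nodup) :
    ∀ u : List (Fin n ⊕ Fin n), (∀ s ∈ u, modeOf s ∈ ms) →
      word u = (ms.map fun j => word (u.filter fun s => modeOf s = j)).prod := by
  induction ms with
  | nil =>
      intro u hu
      have : u = [] := by
        cases u with
        | nil => rfl
        | cons s u => exact absurd (hu s (by simp)) (by simp)
      rw [this]
      simp [word_nil]
  | cons j ms ih =>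
      intro u hu
      obtain ⟨hj, hnd'⟩ := List.nodup_cons.mp hnd
      have hsplit := word_filter_split (fun s => modeOf s = j) u (by
        intro s t hs hts
        apply gen_comm
        have h1 : modeOf s = j := by simpa using hs
        have h2 : ¬ modeOf t = j := by simpa using hts
        rw [h1]
        exact fun hh => h2 hh.symm)
      rw [hsplit]
      rw [List.map_cons, List.prod_cons]
      congr 1
      set u' := u.filter fun s => !(decide (modeOf s = j)) with hu'
      have hu'mem : ∀ s ∈ u', modeOf s ∈ ms := by
        intro s hs
        have h1 := List.of_mem_filter hs
        have h2 : modeOf s ≠ j := by simpa using h1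
        have h3 := hu s (List.mem_of_mem_filter hs)
        simp only [List.mem_cons] at h3
        tauto
      rw [ih hnd' u' hu'mem]
      apply congrArg
      apply List.map_congr_left
      intro j' hj'
      congr 1
      rw [hu', List.filter_filter]
      apply List.filter_congr
      intro s _
      by_cases h : modeOf s = j'
      · have hne : modeOf s ≠ j := by
          rw [h]
          intro hh
          rw [hh] at hj'
          exact hj hj'
        simp [h, hne]
        intro hh
        exact hne (h.trans hh)
      · simp [h]

end Reverse

section SingleMode
variable {n : ℕ}

/-- number operator -/
noncomputable def Nop (j : Fin n) : Weyl n := cre j * ann j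

lemma Nop_mul_ann (j : Fin n) : Nop j * ann j = ann j * Nop j - ann j := by
  have h := ann_cre_same j
  rw [Nop]
  have : ann j * (cre j * ann j) = (cre j * ann j + 1) * ann j := by
    rw [← mul_assoc, h]
  rw [this]
  noncomm_ring

lemma Nop_mul_ann_pow (j : Fin n) (k : ℕ) :
    Nop j * ann j ^ k = ann j ^ k * Nop j - (k : ℂ) • ann j ^ k := by
  induction k with
  | zero => simp
  | succ k ih =>
      have : ann j ^ (k + 1) = ann j * ann j ^ k := by rw [pow_succ']
      rw [this, ← mul_assoc, Nop_mul_ann, sub_mul, mul_assoc, ih]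
      rw [mul_sub, mul_smul_comm]
      push_cast
      rw [add_smul, one_smul, ← mul_assoc]
      abel

lemma ann_mul_cre_pow (j : Fin n) (k : ℕ) :
    ann j * cre j ^ (k + 1) = cre j ^ (k + 1) * ann j + ((k : ℂ) + 1) • cre j ^ k := by
  induction k with
  | zero => simpa using ann_cre_same j
  | succ k ih =>
      have h1 : cre j ^ (k + 2) = cre j * cre j ^ (k + 1) := by rw [pow_succ']
      rw [h1, ← mul_assoc, ann_cre_same, add_mul, one_mul, mul_assoc, ih]
      rw [mul_add, mul_smul_comm, ← mul_assoc, ← pow_succ', ← pow_succ']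
      module

lemma cre_ann_pow_poly (j : Fin n) (k : ℕ) :
    ∃ p : Polynomial ℂ, cre j ^ k * ann j ^ k = Polynomial.aeval (Nop j) p := by
  induction k with
  | zero => exact ⟨1, by simp⟩
  | succ k ih =>
      obtain ⟨p, hp⟩ := ih
      refine ⟨p * (Polynomial.X - Polynomial.C (k : ℂ)), ?_⟩
      have h1 : cre j ^ (k + 1) * ann j ^ (k + 1) = cre j ^ k * (Nop j * ann j ^ k) := by
        rw [pow_succ, pow_succ', Nop]
        noncomm_ring
      rw [h1, Nop_mul_ann_pow, mul_sub, mul_smul_comm, ← mul_assoc, hp]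
      rw [map_mul, map_sub, Polynomial.aeval_X, Polynomial.aeval_C]
      rw [mul_sub]
      congr 1
      rw [Algebra.algebraMap_eq_smul_one, mul_smul_comm, mul_one]

/-- span of normal-ordered single-mode monomials of fixed signed degree -/
noncomputable def Md (j : Fin n) (d : ℤ) : Submodule ℂ (Weyl n) :=
  Submodule.span ℂ {x | ∃ k l : ℕ, (k : ℤ) - l = d ∧ x = cre j ^ k * ann j ^ l}

lemma cre_mul_Md {j : Fin n} {d : ℤ} {x : Weyl n} (hx : x ∈ Md j d) :
    cre j * x ∈ Md j (d + 1) := by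
  induction hx using Submodule.span_induction with
  | mem y hy =>
      obtain ⟨k, l, hkl, rfl⟩ := hy
      apply Submodule.subset_span
      exact ⟨k + 1, l, by push_cast; omega, by rw [pow_succ', mul_assoc]⟩
  | zero => simp
  | add y z _ _ hy hz => rw [mul_add]; exact add_mem hy hz
  | smul c y _ hy => rw [mul_smul_comm]; exact Submodule.smul_mem _ _ hy

lemma ann_mul_Md {j : Fin n} {d : ℤ} {x : Weyl n} (hx : x ∈ Md j d) :
    ann j * x ∈ Md j (d - 1) := by
  induction hx using Submodule.span_induction with
  | mem y hy =>
      obtain ⟨k, l, hkl, rfl⟩ := hy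
      cases k with
      | zero =>
          rw [pow_zero, one_mul]
          apply Submodule.subset_span
          refine ⟨0, l + 1, by push_cast; omega, ?_⟩
          rw [pow_zero, one_mul, pow_succ']
      | succ k =>
          rw [← mul_assoc, ann_mul_cre_pow, add_mul, smul_mul_assoc]
          apply add_mem
          · apply Submodule.subset_span
            refine ⟨k + 1, l + 1, by push_cast; omega, ?_⟩
            rw [mul_assoc, ← pow_succ']
          · apply Submodule.smul_mem
            apply Submodule.subset_span
            exact ⟨k, l, by push_cast; omega, rfl⟩
  | zero => simp
  | add y z _ _ hy hz => rw [mul_add]; exact add_mem hy hz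
  | smul c y _ hy => rw [mul_smul_comm]; exact Submodule.smul_mem _ _ hy

lemma word_mem_Md (j : Fin n) :
    ∀ u : List (Fin n ⊕ Fin n), (∀ s ∈ u, s = Sum.inl j ∨ s = Sum.inr j) →
      word u ∈ Md j (dZ u j) := by
  intro u
  induction u with
  | nil =>
      intro _
      rw [word_nil]
      have : dZ ([] : List (Fin n ⊕ Fin n)) j = 0 := by rw [dZ_nil]
      rw [this]
      apply Submodule.subset_span
      exact ⟨0, 0, by norm_num, by simp⟩
  | cons s u ih =>
      intro hs
      have hu : ∀ t ∈ u, t = Sum.inl j ∨ t = Sum.inr j := fun t htmem => hs t (by simp [htmem])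
      have hmem := ih hu
      rcases hs s (by simp) with hsl | hsl <;> subst hsl
      · rw [word_cons, dZ_cons_inl]
        show gen (Sum.inl j) * word u ∈ Md j (dZ u j - eZ j j)
        have : eZ j j = 1 := by simp [eZ]
        rw [this]
        exact ann_mul_Md hmem
      · rw [word_cons, dZ_cons_inr]
        show gen (Sum.inr j) * word u ∈ Md j (dZ u j + eZ j j)
        have : eZ j j = 1 := by simp [eZ]
        rw [this]
        exact cre_mul_Md hmem

lemma balanced_poly (j : Fin n) (u : List (Fin n ⊕ Fin n))
    (hu : ∀ s ∈ u, s = Sum.inl j ∨ s = Sum.inr j) (hb : dZ u j = 0) :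
    ∃ p : Polynomial ℂ, word u = Polynomial.aeval (Nop j) p := by
  have h1 := word_mem_Md j u hu
  rw [hb] at h1
  have h2 : Md j 0 ≤ Subalgebra.toSubmodule (Polynomial.aeval (Nop j)).range := by
    rw [Md, Submodule.span_le]
    rintro x ⟨k, l, hkl, rfl⟩
    have hkl' : k = l := by omega
    subst hkl'
    obtain ⟨p, hp⟩ := cre_ann_pow_poly j k
    exact ⟨p, hp.symm⟩
  obtain ⟨p, hp⟩ := h2 h1
  exact ⟨p, hp.symm⟩

lemma balanced_commute (j : Fin n) (u v : List (Fin n ⊕ Fin n))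
    (hu : ∀ s ∈ u, s = Sum.inl j ∨ s = Sum.inr j) (hbu : dZ u j = 0)
    (hv : ∀ s ∈ v, s = Sum.inl j ∨ s = Sum.inr j) (hbv : dZ v j = 0) :
    Commute (word u) (word v) := by
  obtain ⟨p, hp⟩ := balanced_poly j u hu hbu
  obtain ⟨q, hq⟩ := balanced_poly j v hv hbv
  rw [hp, hq]
  show _ * _ = _ * _
  rw [← map_mul, mul_comm p q, map_mul]

end SingleMode

section Final
variable {n : ℕ}

lemma filter_single_mode (u : List (Fin n ⊕ Fin n)) (j : Fin n) :
    ∀ s ∈ u.filter (fun s => decide (modeOf s = j)), s = Sum.inl j ∨ s = Sum.inr j := by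
  intro s hs
  exact modeOf_mem_cases s j (by simpa using List.of_mem_filter hs)

lemma mdegC_filter (u : List (Fin n ⊕ Fin n)) (j : Fin n) :
    mdegC (u.filter (fun s => decide (modeOf s = j))) j = mdegC u j := by
  apply List.count_filter
  simp [modeOf]

lemma mdegA_filter (u : List (Fin n ⊕ Fin n)) (j : Fin n) :
    mdegA (u.filter (fun s => decide (modeOf s = j))) j = mdegA u j := by
  apply List.count_filter
  simp [modeOf]

lemma reverse_dir (w wt : List (Fin n ⊕ Fin n))
    (ht : ∀ j : Fin n, mdegC wt j = mdegA wt j)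
    (H : ∀ j : Fin n, mdegC wt j ≠ 0 → mdegC w j = mdegA w j) :
    Commute (word w) (word wt) := by
  have hw := word_mode_factor (List.finRange n) (List.nodup_finRange n) w
    (fun s _ => List.mem_finRange _)
  have hwt := word_mode_factor (List.finRange n) (List.nodup_finRange n) wt
    (fun s _ => List.mem_finRange _)
  rw [hw, hwt]
  apply Commute.list_prod_left
  intro x hx
  obtain ⟨j, hj, rfl⟩ := List.mem_map.mp hx
  apply Commute.list_prod_right
  intro y hy
  obtain ⟨j', hj', rfl⟩ := List.mem_map.mp hy
  by_cases hjj : j = j'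
  · subst hjj
    by_cases h0 : mdegC wt j = 0
    · have h0' : mdegA wt j = 0 := by rw [← ht]; exact h0
      have hnil : wt.filter (fun s => decide (modeOf s = j)) = [] := by
        rw [List.filter_eq_nil_iff]
        intro s hs
        simp only [decide_eq_true_eq]
        intro hmode
        rcases modeOf_mem_cases s j hmode with rfl | rfl
        · exact (List.count_eq_zero.mp h0') hs
        · exact (List.count_eq_zero.mp h0) hs
      rw [hnil, word_nil]
      exact Commute.one_right _
    · have hbalw : mdegC w j = mdegA w j := H j h0
      apply balanced_commute j
      · exact filter_single_mode w j
      · simp only [dZ, mdegC_filter, mdegA_filter, hbalw, sub_self]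
      · exact filter_single_mode wt j
      · simp only [dZ, mdegC_filter, mdegA_filter, ht j, sub_self]
  · apply commute_word_word
    intro s hs t htm
    apply gen_comm
    have h1 : modeOf s = j := by simpa using List.of_mem_filter hs
    have h2 : modeOf t = j' := by simpa using List.of_mem_filter htm
    rw [h1, h2]
    exact hjj

/-- Let `m`, `m̃` be monomials in the `n`-mode Weyl algebra with
multi-degrees `(α, β)` and `(α̃, α̃)`. Then `[m, m̃] = 0` if and only if for every
index `j` with `α̃ⱼ ≠ 0` one has `αⱼ = βⱼ`. -/
theorem statement8 {n : ℕ} (w wt : List (Fin n ⊕ Fin n))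
    (ht : ∀ j : Fin n, mdegC wt j = mdegA wt j) :
    comm (word w) (word wt) = 0 ↔
      ∀ j : Fin n, mdegC wt j ≠ 0 → mdegC w j = mdegA w j := by
  constructor
  · exact forward_dir w wt ht
  · intro H
    rw [comm, sub_eq_zero]
    exact (reverse_dir w wt ht H).eq

end Final

end WeylPaper
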